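/- arXiv:1807.10683 — 3 statements merged into one kernel-verified Lean document; each statement's English description precedes it below -/
import Mathlib

section
/- A strongly primary monoid H is globally tame if and only if ⋂_{u ∈ A(H)} uH ≠ ∅, where A(H) is the set of atoms of H. -/
open Pointwise

section MonoidDefs

variable {G : Type*} [CommGroup G]

/-- `x` is a unit of the submonoid `H`. -/
def IsHUnit (H : Submonoid G) (x : G) : Prop := x ∈ H ∧ x⁻¹ ∈ H

/-- The set of non-units of `H`. -/
def nonUnits (H : Submonoid G) : Set G := {x | x ∈ H ∧ x⁻¹ ∉ H}

/-- `u` is an atom (irreducible element) of `H`. -/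
def IsHAtom (H : Submonoid G) (u : G) : Prop :=
  u ∈ H ∧ ¬ IsHUnit H u ∧
    ∀ a b : G, a ∈ H → b ∈ H → u = a * b → IsHUnit H a ∨ IsHUnit H b

/-- `G` is the quotient group of `H`. -/
def IsQuotientGroup (H : Submonoid G) : Prop :=
  ∀ g : G, ∃ a ∈ H, ∃ b ∈ H, g = a / b

/-- `H` is a primary monoid. -/
def IsPrimaryMonoid (H : Submonoid G) : Prop :=
  (nonUnits H).Nonempty ∧
    ∀ a ∈ nonUnits H, ∀ b ∈ nonUnits H, ∃ n : ℕ, 0 < n ∧ b ^ n ∈ a • (H : Set G)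

/-- `H` is a strongly primary monoid. -/
def IsStronglyPrimary (H : Submonoid G) : Prop :=
  (nonUnits H).Nonempty ∧
    ∀ a ∈ nonUnits H, ∃ n : ℕ, 0 < n ∧ nonUnits H ^ n ⊆ a • (H : Set G)

/-- `x` and `y` are associated in `H`. -/
def HAssoc (H : Submonoid G) (x y : G) : Prop := IsHUnit H (x / y)

/-- The set of lengths of `a`: all `k` such that `a` is a product of `k` atoms
(up to a unit of `H`). -/
def lengthSet (H : Submonoid G) (a : G) : Set ℕ :=
  {k | ∃ s : Multiset G, Multiset.card s = k ∧ (∀ v ∈ s, IsHAtom H v) ∧ HAssoc H a s.prod}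

/-- `Λ(S)`, the supremum of the minimal factorization lengths of elements of `S`. -/
noncomputable def Lambda (H : Submonoid G) (S : Set G) : ℕ∞ :=
  ⨆ (a : G) (_ : a ∈ S) (_ : (lengthSet H a).Nonempty), ((sInf (lengthSet H a) : ℕ) : ℕ∞)

/-- `ρ_k(H)`, the supremum of `sup L(a)` over all `a` with `k ∈ L(a)`. -/
noncomputable def rho (H : Submonoid G) (k : ℕ∞) : ℕ∞ :=
  ⨆ (a : G) (_ : a ∈ H) (_ : ∃ n ∈ lengthSet H a, (n : ℕ∞) = k),
    ⨆ (n : ℕ) (_ : n ∈ lengthSet H a), (n : ℕ∞)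

/-- The elasticity `ρ(H) = sup { m/n : m, n ∈ L(a), a ∈ H }`. -/
noncomputable def elasticity (H : Submonoid G) : ENNReal :=
  ⨆ (a : G) (_ : a ∈ H) (m : ℕ) (_ : m ∈ lengthSet H a) (n : ℕ) (_ : n ∈ lengthSet H a),
    (m : ENNReal) / (n : ENNReal)

/-- `z` is a factorization of `a`: a multiset of atoms whose product is associated to `a`. -/
def IsFactorization (H : Submonoid G) (a : G) (z : Multiset G) : Prop :=
  (∀ v ∈ z, IsHAtom H v) ∧ HAssoc H a z.prod

/-- The distance between two factorizations: cancel a (maximal) common part (up to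
associates) and take the maximum of the lengths of the remaining parts. -/
noncomputable def fdist (H : Submonoid G) (z z' : Multiset G) : ℕ :=
  sInf {N : ℕ | ∃ x x' v w : Multiset G, z = x + v ∧ z' = x' + w ∧
    Multiset.Rel (HAssoc H) x x' ∧ max (Multiset.card v) (Multiset.card w) ≤ N}

/-- `N` is a tame bound for the atom `u`: for every multiple `a` of `u` and every
factorization `z` of `a` there is a factorization `z'` of `a` containing `u`
with `d(z, z') ≤ N`. -/
def TameBound (H : Submonoid G) (u : G) (N : ℕ) : Prop :=
  ∀ a ∈ H, (∃ b ∈ H, a = u * b) → ∀ z : Multiset G, IsFactorization H a z →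
    ∃ z' : Multiset G, IsFactorization H a z' ∧ (∃ v ∈ z', HAssoc H v u) ∧ fdist H z z' ≤ N

/-- `H` is locally tame: `t(u) < ∞` for every atom `u`. -/
def LocallyTame (H : Submonoid G) : Prop :=
  ∀ u : G, IsHAtom H u → ∃ N : ℕ, TameBound H u N

/-- `H` is globally tame: `sup { t(u) : u an atom } < ∞`. -/
def GloballyTame (H : Submonoid G) : Prop :=
  ∃ N : ℕ, ∀ u : G, IsHAtom H u → TameBound H u N

/-- The local tame degree `t(u)` of `u`. -/
noncomputable def tameDeg (H : Submonoid G) (u : G) : ℕ∞ :=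
  sInf {N : ℕ∞ | ∃ n : ℕ, TameBound H u n ∧ N = (n : ℕ∞)}

/-- `N` is an omega bound for `a`: whenever `a` divides a product of elements of `H`,
it divides a subproduct with at most `N` factors. -/
def OmegaBound (H : Submonoid G) (a : G) (N : ℕ) : Prop :=
  ∀ s : Multiset G, (∀ x ∈ s, x ∈ H) → (∃ c ∈ H, s.prod = a * c) →
    ∃ t : Multiset G, t ≤ s ∧ Multiset.card t ≤ N ∧ ∃ c ∈ H, t.prod = a * c

/-- The omega invariant `ω(a)`. -/
noncomputable def omegaDeg (H : Submonoid G) (a : G) : ℕ∞ :=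
  sInf {N : ℕ∞ | ∃ n : ℕ, OmegaBound H a n ∧ N = (n : ℕ∞)}

/-- `M(x)`: the smallest `n ≥ 1` with `mⁿ ⊆ xH`. -/
noncomputable def Mdeg (H : Submonoid G) (x : G) : ℕ :=
  sInf {n : ℕ | 0 < n ∧ nonUnits H ^ n ⊆ x • (H : Set G)}

/-- The complete integral closure `Ĥ` of `H` (inside the quotient group). -/
def hatH (H : Submonoid G) : Set G := {x | ∃ c ∈ H, ∀ n : ℕ, c * x ^ n ∈ H}

/-- The set of non-units of `Ĥ`. -/
def hatNonUnits (H : Submonoid G) : Set G := {x | x ∈ hatH H ∧ x⁻¹ ∉ hatH H}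

/-- The root closure `H̃` of `H`. -/
def tildeH (H : Submonoid G) : Set G := {x | ∃ n : ℕ, 0 < n ∧ x ^ n ∈ H}

/-- The set of non-units of `H̃`. -/
def tildeNonUnits (H : Submonoid G) : Set G := {x | x ∈ tildeH H ∧ x⁻¹ ∉ tildeH H}

/-- The seminormal closure `H'` of `H`. -/
def seminormalClosure (H : Submonoid G) : Set G :=
  {x | ∃ N : ℕ, ∀ n : ℕ, N ≤ n → x ^ n ∈ H}

/-- The conductor `(H : Ĥ)`. -/
def conductorH (H : Submonoid G) : Set G := {z | ∀ x ∈ hatH H, z * x ∈ H}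

/-- `Ĥ` is a primary monoid. -/
def HatPrimary (H : Submonoid G) : Prop :=
  (hatNonUnits H).Nonempty ∧
    ∀ a ∈ hatNonUnits H, ∀ b ∈ hatNonUnits H,
      ∃ n : ℕ, 0 < n ∧ ∃ c ∈ hatH H, b ^ n = a * c

/-- `Ĥ` is a valuation monoid. -/
def HatValuation (H : Submonoid G) : Prop :=
  ∀ a ∈ hatH H, ∀ b ∈ hatH H,
    (∃ c ∈ hatH H, b = a * c) ∨ (∃ c ∈ hatH H, a = b * c)

/-- `H` is atomic. -/
def Atomic (H : Submonoid G) : Prop :=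
  ∀ a ∈ nonUnits H, ∃ s : Multiset G, (∀ v ∈ s, IsHAtom H v) ∧ a = s.prod

/-- `H` is a discrete valuation monoid, i.e. `H_red ≅ (ℕ₀, +)`. -/
def IsDiscreteValuationMonoid (H : Submonoid G) : Prop :=
  ∃ p ∈ H, ¬ IsHUnit H p ∧ ∀ a ∈ H, ∃ n : ℕ, ∃ ε : G, IsHUnit H ε ∧ a = ε * p ^ n

end MonoidDefs

/-!
Suppose `N` bounds all tame degrees and fix an atom `u₀`. Every atom `u` divides some power
`u₀ ^ M`; a factorization of `u₀ ^ M` containing (an associate of) `u` at distance `≤ N` from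
`u₀ ^ M` itself shows that `u` divides a product of at most `N + 1` factors `u₀`, so
`u₀ ^ (N + 1)` is a common multiple of all atoms.

Conversely, let `c` be a common multiple of all atoms and `mᴹ ⊆ cH`, so that `mᴹ ⊆ uH` for
every atom `u`. If `u` divides `a` and `z` is a factorization of `a`, then `u` divides the
product `s` of at most `M` atoms of `z`. Write `s = u c'` and factor `c'` as `t`. Since
`m^{|s| M} ⊆ sH`, the factorization `u t` of `s` has length at most `|s| M ≤ M²`, and replacing
`s` by `u t` in `z` gives a factorization containing `u` at distance at most `M²` from `z`.
-/

theorem Multiset.exists_le_card_eq {α : Type*} {s : Multiset α} {n : ℕ}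
    (h : n ≤ Multiset.card s) : ∃ t ≤ s, Multiset.card t = n := by
  induction s using Quotient.inductionOn with
  | h l => exact ⟨l.take n, Multiset.coe_le.2 (List.take_sublist n l).subperm, by simpa using h⟩

theorem Multiset.prod_mem_set_pow {M : Type*} [CommMonoid M] {S : Set M} {s : Multiset M}
    (hs : ∀ x ∈ s, x ∈ S) : s.prod ∈ S ^ Multiset.card s := by
  induction s using Multiset.induction with
  | empty => simp
  | cons a s ih =>
    rw [Multiset.prod_cons, Multiset.card_cons, pow_succ']
    exact Set.mul_mem_mul (hs a (Multiset.mem_cons_self a s))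
      (ih fun x hx => hs x (Multiset.mem_cons_of_mem hx))

section

variable {G : Type*} [CommGroup G] {H : Submonoid G}

-- Computations up to associates are done in `G ⧸ unitGroup H`.
def unitGroup (H : Submonoid G) : Subgroup G where
  carrier := {x | IsHUnit H x}
  mul_mem' hx hy := ⟨H.mul_mem hx.1 hy.1, by rw [mul_inv]; exact H.mul_mem hx.2 hy.2⟩
  one_mem' := ⟨H.one_mem, by rw [inv_one]; exact H.one_mem⟩
  inv_mem' hx := ⟨hx.2, by rw [inv_inv]; exact hx.1⟩

theorem hAssoc_iff_mk_eq {x y : G} : HAssoc H x y ↔ (x : G ⧸ unitGroup H) = y :=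
  (QuotientGroup.eq_iff_div_mem (N := unitGroup H)).symm

theorem mk_prod_eq_of_rel_hAssoc {x y : Multiset G} (h : Multiset.Rel (HAssoc H) x y) :
    (x.prod : G ⧸ unitGroup H) = y.prod := by
  induction h with
  | zero => rfl
  | cons hab _ ih =>
    simp only [Multiset.prod_cons, QuotientGroup.mk_mul, hAssoc_iff_mk_eq.1 hab, ih]

theorem self_mem_smul_set (x : G) : x ∈ x • (H : Set G) := by
  simpa using Set.smul_mem_smul_set (a := x) H.one_mem

theorem smul_set_subset_of_mem_smul_set {x y : G} (h : y ∈ x • (H : Set G)) :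
    y • (H : Set G) ⊆ x • (H : Set G) := by
  obtain ⟨c, hc, rfl⟩ := Set.mem_smul_set.1 h
  rw [smul_eq_mul, mul_smul]
  exact Set.smul_set_mono (Set.smul_set_subset_iff.2 fun _ hb => H.mul_mem hc hb)

theorem smul_set_eq_of_hAssoc {x y : G} (h : HAssoc H x y) :
    x • (H : Set G) = y • (H : Set G) := by
  refine (smul_set_subset_of_mem_smul_set (Set.mem_smul_set.2 ⟨x / y, h.1, ?_⟩)).antisymm
    (smul_set_subset_of_mem_smul_set (Set.mem_smul_set.2 ⟨(x / y)⁻¹, h.2, ?_⟩))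
  · rw [smul_eq_mul, mul_div_cancel]
  · rw [smul_eq_mul, inv_div, mul_div_cancel]

theorem prod_mem_smul_set_of_mem {s : Multiset G} (hs : ∀ x ∈ s, x ∈ H) {y : G}
    (hy : y ∈ s) : s.prod ∈ y • (H : Set G) := by
  obtain ⟨t, rfl⟩ := Multiset.exists_cons_of_mem hy
  rw [Multiset.prod_cons]
  exact Set.smul_mem_smul_set
    (multiset_prod_mem _ fun x hx => hs x (Multiset.mem_cons_of_mem hx))

theorem pow_add_subset_smul_set_mul {S : Set G} {m n : ℕ} {x y : G}
    (hx : S ^ m ⊆ x • (H : Set G)) (hy : S ^ n ⊆ y • (H : Set G)) :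
    S ^ (m + n) ⊆ (x * y) • (H : Set G) := by
  rw [pow_add, ← H.coe_mul_self_eq, ← smul_mul_smul_comm]
  exact Set.mul_subset_mul hx hy

theorem pow_card_mul_subset_smul_set_prod {S : Set G} {M : ℕ} {s : Multiset G}
    (hs : ∀ x ∈ s, S ^ M ⊆ x • (H : Set G)) :
    S ^ (Multiset.card s * M) ⊆ s.prod • (H : Set G) := by
  induction s using Multiset.induction with
  | empty => simp
  | cons a s ih =>
    rw [Multiset.card_cons, add_one_mul, add_comm, Multiset.prod_cons]
    exact pow_add_subset_smul_set_mul (hs a (Multiset.mem_cons_self a s))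
      (ih fun x hx => hs x (Multiset.mem_cons_of_mem hx))

theorem exists_le_card_le_prod_mem_smul_set {S : Set G} {M : ℕ} {u : G}
    (hM : S ^ M ⊆ u • (H : Set G)) {z : Multiset G} (hz : ∀ x ∈ z, x ∈ S)
    (hzu : z.prod ∈ u • (H : Set G)) :
    ∃ s ≤ z, Multiset.card s ≤ M ∧ s.prod ∈ u • (H : Set G) := by
  rcases le_or_gt (Multiset.card z) M with hle | hlt
  · exact ⟨z, le_rfl, hle, hzu⟩
  · obtain ⟨s, hsz, rfl⟩ := Multiset.exists_le_card_eq hlt.le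
    exact ⟨s, hsz, le_rfl,
      hM (Multiset.prod_mem_set_pow fun x hx => hz x (Multiset.mem_of_le hsz hx))⟩

theorem mul_mem_nonUnits {x y : G} (hx : x ∈ nonUnits H) (hy : y ∈ H) :
    x * y ∈ nonUnits H :=
  ⟨H.mul_mem hx.1 hy, fun h => hx.2 (by simpa using H.mul_mem hy h)⟩

theorem IsHAtom.mem_nonUnits {u : G} (hu : IsHAtom H u) : u ∈ nonUnits H :=
  ⟨hu.1, fun h => hu.2.1 ⟨hu.1, h⟩⟩

theorem mem_nonUnits_of_mem_smul_set {u c : G} (hu : u ∈ nonUnits H)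
    (hc : c ∈ u • (H : Set G)) : c ∈ nonUnits H := by
  obtain ⟨b, hb, rfl⟩ := Set.mem_smul_set.1 hc
  exact mul_mem_nonUnits hu hb

theorem prod_mem_nonUnits {s : Multiset G} (hs : ∀ x ∈ s, x ∈ nonUnits H) (hne : s ≠ 0) :
    s.prod ∈ nonUnits H := by
  obtain ⟨a, ha⟩ := Multiset.exists_mem_of_ne_zero hne
  obtain ⟨t, rfl⟩ := Multiset.exists_cons_of_mem ha
  rw [Multiset.prod_cons]
  exact mul_mem_nonUnits (hs a ha)
    (multiset_prod_mem _ fun x hx => (hs x (Multiset.mem_cons_of_mem hx)).1)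

theorem card_le_of_pow_subset_smul_set {s : Multiset G} {n : ℕ}
    (hs : ∀ x ∈ s, x ∈ nonUnits H) (hsub : nonUnits H ^ n ⊆ s.prod • (H : Set G)) :
    Multiset.card s ≤ n := by
  by_contra! hlt
  obtain ⟨t, hts, htn⟩ := Multiset.exists_le_card_eq hlt.le
  obtain ⟨r, rfl⟩ := Multiset.le_iff_exists_add.1 hts
  have hr : r ≠ 0 := by
    rintro rfl
    simp [htn] at hlt
  -- the first `n` factors already lie in `s.prod • H`, so the others multiply to a unit
  obtain ⟨c, hc, htc⟩ := Set.mem_smul_set.1 <| hsub <| htn ▸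
    Multiset.prod_mem_set_pow fun x hx => hs x (Multiset.mem_add.2 (Or.inl hx))
  have hrc : r.prod⁻¹ = c := by
    rw [smul_eq_mul, Multiset.prod_add, mul_assoc, mul_eq_left] at htc
    exact inv_eq_of_mul_eq_one_right htc
  exact (prod_mem_nonUnits (fun x hx => hs x (Multiset.mem_add.2 (Or.inr hx))) hr).2 (hrc ▸ hc)

theorem exists_mul_eq_of_not_isHAtom {v : G} (hv : v ∈ nonUnits H) (h : ¬ IsHAtom H v) :
    ∃ p ∈ nonUnits H, ∃ q ∈ nonUnits H, v = p * q := by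
  simp only [IsHAtom, IsHUnit, not_and, not_forall, not_or] at h
  obtain ⟨p, q, hp, hq, rfl, hpu, hqu⟩ := h hv.1 fun _ => hv.2
  exact ⟨p, ⟨hp, hpu hp⟩, q, ⟨hq, hqu hq⟩, rfl⟩

theorem IsStronglyPrimary.atomic (hsp : IsStronglyPrimary H) : Atomic H := by
  intro a ha
  obtain ⟨n, -, hn⟩ := hsp.2 a ha
  let S : Set ℕ := {k | ∃ s : Multiset G, Multiset.card s = k ∧
    (∀ x ∈ s, x ∈ nonUnits H) ∧ s.prod = a}
  have hS : BddAbove S := ⟨n, by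
    rintro _ ⟨s, rfl, hs, rfl⟩
    exact card_le_of_pow_subset_smul_set hs hn⟩
  -- a product of as many non-units as possible is a product of atoms
  obtain ⟨s, hcard, hs, rfl⟩ :=
    Nat.sSup_mem (s := S) ⟨1, {a}, by simp, by simpa using ha, by simp⟩ hS
  refine ⟨s, fun v hv => by_contra fun hva => ?_, rfl⟩
  obtain ⟨p, hp, q, hq, rfl⟩ := exists_mul_eq_of_not_isHAtom (hs _ hv) hva
  obtain ⟨t, rfl⟩ := Multiset.exists_cons_of_mem hv
  have hlonger : Multiset.card (p * q ::ₘ t) + 1 ∈ S := by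
    refine ⟨p ::ₘ q ::ₘ t, by simp, fun x hx => ?_, by simp [mul_assoc]⟩
    rcases Multiset.mem_cons.1 hx with rfl | hx
    · exact hp
    rcases Multiset.mem_cons.1 hx with rfl | hx
    · exact hq
    · exact hs x (Multiset.mem_cons_of_mem hx)
  have := le_csSup hS hlonger
  omega

theorem Atomic.exists_isFactorization (hH : Atomic H) {c : G} (hc : c ∈ H) :
    ∃ t : Multiset G, IsFactorization H c t := by
  by_cases hcu : c⁻¹ ∈ H
  · exact ⟨0, by simp, by simpa [HAssoc, IsHUnit] using ⟨hc, hcu⟩⟩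
  · obtain ⟨t, ht, rfl⟩ := hH c ⟨hc, hcu⟩
    exact ⟨t, ht, hAssoc_iff_mk_eq.2 rfl⟩

theorem exists_decomposition_of_fdist_le {z z' : Multiset G} {N : ℕ} (h : fdist H z z' ≤ N) :
    ∃ x x' v w : Multiset G, z = x + v ∧ z' = x' + w ∧ Multiset.Rel (HAssoc H) x x' ∧
      Multiset.card v ≤ N ∧ Multiset.card w ≤ N := by
  obtain ⟨x, x', v, w, hz, hz', hr, hvw⟩ :=
    Nat.sInf_mem (s := {N : ℕ | ∃ x x' v w : Multiset G, z = x + v ∧ z' = x' + w ∧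
        Multiset.Rel (HAssoc H) x x' ∧ max (Multiset.card v) (Multiset.card w) ≤ N})
      ⟨_, 0, 0, z, z', (zero_add z).symm, (zero_add z').symm, .zero, le_rfl⟩
  exact ⟨x, x', v, w, hz, hz', hr, (le_max_left _ _).trans (hvw.trans h),
    (le_max_right _ _).trans (hvw.trans h)⟩

theorem exists_decomposition_mem_of_fdist_le {z z' : Multiset G} {N : ℕ}
    (h : fdist H z z' ≤ N) {u : G} (hu : u ∈ z') :
    ∃ x x' v w : Multiset G, z = x + v ∧ z' = x' + w ∧ Multiset.Rel (HAssoc H) x x' ∧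
      Multiset.card v ≤ N + 1 ∧ u ∈ w := by
  obtain ⟨x, x', v, w, rfl, rfl, hr, hv, -⟩ := exists_decomposition_of_fdist_le h
  rcases Multiset.mem_add.1 hu with hx' | hw
  · -- move `u` and its partner in `x` out of the common part
    obtain ⟨x'', rfl⟩ := Multiset.exists_cons_of_mem hx'
    obtain ⟨a, x₀, -, hr₀, rfl⟩ := Multiset.rel_cons_right.1 hr
    exact ⟨x₀, x'', a ::ₘ v, u ::ₘ w, by simp, by simp, hr₀, by simpa using hv,
      Multiset.mem_cons_self u w⟩
  · exact ⟨x, x', v, w, rfl, rfl, hr, hv.trans N.le_succ, hw⟩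

theorem pow_succ_mem_smul_set_of_tameBound (hsp : IsStronglyPrimary H) {u₀ u : G}
    (hu₀ : IsHAtom H u₀) (hu : IsHAtom H u) {N : ℕ} (hN : TameBound H u N) :
    u₀ ^ (N + 1) ∈ u • (H : Set G) := by
  obtain ⟨M, -, hM⟩ := hsp.2 u hu.mem_nonUnits
  obtain ⟨b, hb, hub⟩ := Set.mem_smul_set.1 (hM (Set.pow_mem_pow hu₀.mem_nonUnits))
  have hz : IsFactorization H (u₀ ^ M) (Multiset.replicate M u₀) :=
    ⟨fun v hv => Multiset.eq_of_mem_replicate hv ▸ hu₀,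
      hAssoc_iff_mk_eq.2 (by rw [Multiset.prod_replicate])⟩
  obtain ⟨z', ⟨hz'atoms, hz'⟩, ⟨u', hu'z', hu'u⟩, hd⟩ :=
    hN _ (pow_mem hu₀.1 M) ⟨b, hb, hub.symm⟩ _ hz
  obtain ⟨x, x', v, w, hzx, rfl, hr, hv, hu'w⟩ := exists_decomposition_mem_of_fdist_le hd hu'z'
  obtain ⟨k, -, rfl⟩ := Multiset.le_replicate_iff.1 (hzx ▸ Multiset.le_add_left v x)
  have hvw : HAssoc H (Multiset.replicate k u₀).prod w.prod := by
    rw [hAssoc_iff_mk_eq]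
    refine mul_left_cancel (a := (x.prod : G ⧸ unitGroup H)) ?_
    rw [← QuotientGroup.mk_mul, ← Multiset.prod_add, ← hzx, ← hAssoc_iff_mk_eq.1 hz.2,
      hAssoc_iff_mk_eq.1 hz', Multiset.prod_add, QuotientGroup.mk_mul,
      mk_prod_eq_of_rel_hAssoc hr]
  have hk : k ≤ N + 1 := by simpa using hv
  refine Set.mem_of_mem_of_subset (self_mem_smul_set (H := H) _) ?_
  calc u₀ ^ (N + 1) • (H : Set G)
      ⊆ (Multiset.replicate k u₀).prod • (H : Set G) := by
        refine smul_set_subset_of_mem_smul_set (Set.mem_smul_set.2 ⟨u₀ ^ (N + 1 - k),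
          pow_mem hu₀.1 _, ?_⟩)
        rw [Multiset.prod_replicate, smul_eq_mul, ← pow_add, Nat.add_sub_cancel' hk]
    _ = w.prod • (H : Set G) := smul_set_eq_of_hAssoc hvw
    _ ⊆ u' • (H : Set G) := smul_set_subset_of_mem_smul_set <| prod_mem_smul_set_of_mem
        (fun y hy => (hz'atoms y (Multiset.mem_add.2 (Or.inr hy))).1) hu'w
    _ = u • (H : Set G) := smul_set_eq_of_hAssoc hu'u

theorem exists_pow_subset_smul_set_of_mem_iInter (hsp : IsStronglyPrimary H) {c : G}
    (hc : c ∈ ⋂ (u : G) (_ : IsHAtom H u), u • (H : Set G)) :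
    ∃ M : ℕ, ∀ u : G, IsHAtom H u → nonUnits H ^ M ⊆ u • (H : Set G) := by
  rw [Set.mem_iInter₂] at hc
  by_cases hatom : ∃ u₀, IsHAtom H u₀
  · obtain ⟨u₀, hu₀⟩ := hatom
    obtain ⟨M, -, hM⟩ :=
      hsp.2 c (mem_nonUnits_of_mem_smul_set hu₀.mem_nonUnits (hc u₀ hu₀))
    exact ⟨M, fun u hu => hM.trans (smul_set_subset_of_mem_smul_set (hc u hu))⟩
  · exact ⟨0, fun u hu => absurd ⟨u, hu⟩ hatom⟩

theorem tameBound_mul_self_of_pow_subset (hH : Atomic H) {M : ℕ}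
    (hM : ∀ v : G, IsHAtom H v → nonUnits H ^ M ⊆ v • (H : Set G)) {u : G}
    (hu : IsHAtom H u) : TameBound H u (M * M) := by
  rintro a - ⟨b, hb, rfl⟩ z ⟨hz, hza⟩
  have hzu : z.prod ∈ u • (H : Set G) :=
    smul_set_subset_of_mem_smul_set (Set.smul_mem_smul_set hb)
      (smul_set_eq_of_hAssoc hza ▸ self_mem_smul_set _)
  obtain ⟨s, hsz, hsM, hsu⟩ := exists_le_card_le_prod_mem_smul_set (hM u hu)
    (fun x hx => (hz x hx).mem_nonUnits) hzu
  obtain ⟨r, rfl⟩ := Multiset.le_iff_exists_add.1 hsz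
  have hs : ∀ x ∈ s, IsHAtom H x := fun x hx => hz x (Multiset.mem_add.2 (Or.inl hx))
  have hr : ∀ x ∈ r, IsHAtom H x := fun x hx => hz x (Multiset.mem_add.2 (Or.inr hx))
  obtain ⟨c, hc, hsc⟩ := Set.mem_smul_set.1 hsu
  obtain ⟨t, ht, hct⟩ := hH.exists_isFactorization hc
  have hst : HAssoc H s.prod (u ::ₘ t).prod := by
    rw [hAssoc_iff_mk_eq, ← hsc, Multiset.prod_cons, smul_eq_mul, QuotientGroup.mk_mul,
      QuotientGroup.mk_mul, hAssoc_iff_mk_eq.1 hct]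
  have hut : ∀ x ∈ u ::ₘ t, IsHAtom H x := by
    simpa only [Multiset.mem_cons, forall_eq_or_imp] using ⟨hu, ht⟩
  have hcard : Multiset.card (u ::ₘ t) ≤ M * M :=
    calc Multiset.card (u ::ₘ t) ≤ Multiset.card s * M :=
          card_le_of_pow_subset_smul_set (fun x hx => (hut x hx).mem_nonUnits)
            (smul_set_eq_of_hAssoc hst ▸ pow_card_mul_subset_smul_set_prod
              fun x hx => hM x (hs x hx))
      _ ≤ M * M := Nat.mul_le_mul_right M hsM
  refine ⟨u ::ₘ t + r, ⟨fun x hx => ?_, ?_⟩, ⟨u, by simp, hAssoc_iff_mk_eq.2 rfl⟩, ?_⟩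
  · rcases Multiset.mem_add.1 hx with hx | hx
    exacts [hut x hx, hr x hx]
  · rw [hAssoc_iff_mk_eq, hAssoc_iff_mk_eq.1 hza, Multiset.prod_add, Multiset.prod_add,
      QuotientGroup.mk_mul, QuotientGroup.mk_mul, hAssoc_iff_mk_eq.1 hst]
  · exact Nat.sInf_le ⟨r, r, s, u ::ₘ t, add_comm s r, add_comm _ r,
      Multiset.rel_refl_of_refl_on fun x _ => hAssoc_iff_mk_eq.2 rfl,
      max_le (hsM.trans (Nat.le_mul_self M)) hcard⟩

end

theorem stmt1_general {G : Type*} [CommGroup G] (H : Submonoid G)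
    (hsp : IsStronglyPrimary H) :
    GloballyTame H ↔ (⋂ (u : G) (_ : IsHAtom H u), u • (H : Set G)).Nonempty := by
  constructor
  · rintro ⟨N, hN⟩
    by_cases hatom : ∃ u₀, IsHAtom H u₀
    · obtain ⟨u₀, hu₀⟩ := hatom
      exact ⟨u₀ ^ (N + 1), Set.mem_iInter₂.2 fun u hu =>
        pow_succ_mem_smul_set_of_tameBound hsp hu₀ hu (hN u hu)⟩
    · exact ⟨1, Set.mem_iInter₂.2 fun u hu => absurd ⟨u, hu⟩ hatom⟩
  · rintro ⟨c, hc⟩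
    obtain ⟨M, hM⟩ := exists_pow_subset_smul_set_of_mem_iInter hsp hc
    exact ⟨M * M, fun u hu => tameBound_mul_self_of_pow_subset hsp.atomic hM hu⟩

/-- A strongly primary monoid `H` is globally tame if and only if
`⋂_{u ∈ A(H)} uH ≠ ∅`. -/
theorem stmt1 {G : Type*} [CommGroup G] (H : Submonoid G) (hq : IsQuotientGroup H)
    (hsp : IsStronglyPrimary H) :
    GloballyTame H ↔ (⋂ (u : G) (_ : IsHAtom H u), u • (H : Set G)).Nonempty :=
  stmt1_general H hsp
end

section
/- For a strongly primary monoid H: if H is globally tame then the elasticity ρ(H) is finite; if ρ(H) < ∞ then ρ_k(H) < ∞ for every k ∈ ℕ; and if ρ_k(H) < ∞ for every k ∈ ℕ then Λ(H) = ∞. -/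
open Pointwise

/-! If every atom has tame degree at most `N`, then starting from any factorization `z` of `a`
one can reach each atom of a given factorization `s` of `a` at distance at most `N`; peeling off
the atoms of `s` one at a time gives `|z| ≤ (N + 1) |s|`, so `ρ(H) ≤ N + 1`. Finite elasticity
bounds `ρ_k(H)` by `ρ(H) k`. A strongly primary monoid has an atom `u`, and `u ^ n` has a
factorization of length `n`; if `Λ(H)` were finite, the minimal lengths of the `u ^ n` would stay
in `[1, Λ(H)]`, so one of the finitely many `ρ_k(H)` with `k ≤ Λ(H)` would be unbounded. -/

section Factorization

variable {G : Type*} [CommGroup G] {H : Submonoid G} {a u v x y : G} {z z' : Multiset G}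

lemma isHUnit_one : IsHUnit H 1 := ⟨H.one_mem, by simp⟩

lemma IsHUnit.mul (hx : IsHUnit H x) (hy : IsHUnit H y) : IsHUnit H (x * y) :=
  ⟨H.mul_mem hx.1 hy.1, by rw [mul_inv]; exact H.mul_mem hx.2 hy.2⟩

lemma IsHUnit.inv (hx : IsHUnit H x) : IsHUnit H x⁻¹ := ⟨hx.2, by simpa using hx.1⟩

lemma IsHUnit.of_mul_left (hx : x ∈ H) (hy : y ∈ H) (h : IsHUnit H (x * y)) : IsHUnit H x :=
  ⟨hx, by simpa using H.mul_mem hy h.2⟩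

lemma hAssoc_refl (x : G) : HAssoc H x x := by
  simpa [HAssoc] using isHUnit_one

lemma IsFactorization.mem (hz : IsFactorization H a z) : a ∈ H := by
  simpa using H.mul_mem hz.2.1 (H.multiset_prod_mem z fun v hv => (hz.1 v hv).1)

lemma IsFactorization.eq_zero_of_isHUnit (hz : IsFactorization H a z) (ha : IsHUnit H a) :
    z = 0 := by
  classical
  by_contra hne
  obtain ⟨v, hv⟩ := Multiset.exists_mem_of_ne_zero hne
  have hprod : IsHUnit H (v * (z.erase v).prod) := by
    rw [← Multiset.prod_cons, Multiset.cons_erase hv]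
    simpa using ha.mul hz.2.inv
  exact (hz.1 v hv).2.1 <| IsHUnit.of_mul_left (hz.1 v hv).1
    (H.multiset_prod_mem _ fun w hw => (hz.1 w (Multiset.mem_of_mem_erase hw)).1) hprod

lemma IsFactorization.div_of_cons (hz : IsFactorization H a (v ::ₘ z)) (hvu : HAssoc H v u) :
    IsFactorization H (a / u) z := by
  refine ⟨fun w hw => hz.1 w (Multiset.mem_cons_of_mem hw), ?_⟩
  have h := hz.2.mul hvu
  rw [Multiset.prod_cons] at h
  change IsHUnit H (a / u / z.prod)
  rwa [div_mul_div_comm, mul_comm a v, mul_assoc, mul_div_mul_left_eq_div, ← div_div,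
    div_right_comm] at h

lemma mem_lengthSet_iff {k : ℕ} :
    k ∈ lengthSet H a ↔ ∃ z, IsFactorization H a z ∧ Multiset.card z = k := by
  simp only [lengthSet, IsFactorization, Set.mem_ofPred_eq]
  tauto

lemma mem_lengthSet_pow (hu : IsHAtom H u) (n : ℕ) : n ∈ lengthSet H (u ^ n) :=
  ⟨Multiset.replicate n u, Multiset.card_replicate n u,
    fun v hv => Multiset.eq_of_mem_replicate hv ▸ hu, by simpa [HAssoc] using isHUnit_one⟩

lemma zero_notMem_lengthSet_pow (hu : IsHAtom H u) {n : ℕ} (hn : 0 < n) :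
    0 ∉ lengthSet H (u ^ n) := by
  rw [mem_lengthSet_iff]
  rintro ⟨z, hz, hcard⟩
  obtain ⟨m, rfl⟩ := Nat.exists_eq_add_of_lt hn
  have hunit : IsHUnit H (u * u ^ m) := by
    simpa [Multiset.card_eq_zero.1 hcard, HAssoc, ← pow_succ'] using hz.2
  exact hu.2.1 (IsHUnit.of_mul_left hu.1 (H.pow_mem hu.1 m) hunit)

lemma card_le_card_add_of_fdist_le {N : ℕ} (h : fdist H z z' ≤ N) :
    Multiset.card z ≤ Multiset.card z' + N := by
  unfold fdist at h
  have hne : {N : ℕ | ∃ x x' v w : Multiset G, z = x + v ∧ z' = x' + w ∧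
      Multiset.Rel (HAssoc H) x x' ∧ max (Multiset.card v) (Multiset.card w) ≤ N}.Nonempty :=
    ⟨_, 0, 0, z, z', (zero_add z).symm, (zero_add z').symm, Multiset.Rel.zero, le_rfl⟩
  obtain ⟨x, x', v, w, rfl, rfl, hrel, hmax⟩ := Nat.sInf_mem hne
  have := Multiset.card_eq_card_of_rel hrel
  simp only [Multiset.card_add]
  omega

end Factorization

section Invariants

variable {G : Type*} [CommGroup G] {H : Submonoid G}

open scoped ENNReal

lemma card_le_of_tameBound {N : ℕ} (hN : ∀ u, IsHAtom H u → TameBound H u N) {a : G}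
    {s z : Multiset G} (hs : IsFactorization H a s) (hz : IsFactorization H a z) :
    Multiset.card z ≤ (N + 1) * Multiset.card s := by
  classical
  induction s using Multiset.induction_on generalizing a z with
  | empty =>
    rw [hz.eq_zero_of_isHUnit (by simpa [HAssoc] using hs.2)]
    simp
  | cons u s ih =>
    have hs' : IsFactorization H (a / u) s := hs.div_of_cons (hAssoc_refl u)
    obtain ⟨z', hz', ⟨v, hv, hvu⟩, hdist⟩ := hN u (hs.1 u (Multiset.mem_cons_self u s)) a
      hs.mem ⟨a / u, hs'.mem, (mul_div_cancel u a).symm⟩ z hz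
    have hz'' : IsFactorization H (a / u) (z'.erase v) :=
      (Multiset.cons_erase hv ▸ hz').div_of_cons hvu
    calc Multiset.card z ≤ Multiset.card z' + N := card_le_card_add_of_fdist_le hdist
      _ = Multiset.card (z'.erase v) + 1 + N := by rw [Multiset.card_erase_add_one hv]
      _ ≤ (N + 1) * Multiset.card s + 1 + N := by gcongr; exact ih hs' hz''
      _ = (N + 1) * Multiset.card (u ::ₘ s) := by rw [Multiset.card_cons]; ring

lemma div_le_elasticity {a : G} (ha : a ∈ H) {m n : ℕ} (hm : m ∈ lengthSet H a)
    (hn : n ∈ lengthSet H a) : (m : ℝ≥0∞) / n ≤ elasticity H :=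
  le_iSup₂_of_le a ha <| le_iSup₂_of_le m hm <| le_iSup₂_of_le n hn le_rfl

lemma le_rho {a : G} (ha : a ∈ H) {k n : ℕ} (hk : k ∈ lengthSet H a)
    (hn : n ∈ lengthSet H a) : (n : ℕ∞) ≤ rho H k :=
  le_iSup₂_of_le a ha <| le_iSup_of_le ⟨k, hk, rfl⟩ <| le_iSup₂_of_le n hn le_rfl

lemma sInf_lengthSet_le_lambda {S : Set G} {a : G} (ha : a ∈ S)
    (hne : (lengthSet H a).Nonempty) : ((sInf (lengthSet H a) : ℕ) : ℕ∞) ≤ Lambda H S :=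
  le_iSup₂_of_le a ha <| le_iSup_of_le hne le_rfl

lemma elasticity_le_of_tameBound {N : ℕ} (hN : ∀ u, IsHAtom H u → TameBound H u N) :
    elasticity H ≤ N + 1 := by
  refine iSup₂_le fun a _ => iSup₂_le fun m hm => iSup₂_le fun n hn => ?_
  obtain ⟨s, hs, rfl⟩ := mem_lengthSet_iff.1 hn
  obtain ⟨z, hz, rfl⟩ := mem_lengthSet_iff.1 hm
  exact ENNReal.div_le_of_le_mul (by exact_mod_cast card_le_of_tameBound hN hs hz)

lemma elasticity_lt_top_of_globallyTame (hgt : GloballyTame H) : elasticity H < ⊤ := by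
  obtain ⟨N, hN⟩ := hgt
  exact (elasticity_le_of_tameBound hN).trans_lt (by simp)

lemma rho_lt_top_of_elasticity_lt_top (hel : elasticity H < ⊤) {k : ℕ} (hk : 0 < k) :
    rho H k < ⊤ := by
  obtain ⟨N, hN⟩ := ENNReal.exists_nat_gt (ENNReal.mul_ne_top hel.ne (ENNReal.natCast_ne_top k))
  refine lt_of_le_of_lt (b := (N : ℕ∞)) ?_ (ENat.natCast_lt_top N)
  refine iSup₂_le fun a ha => iSup_le fun ⟨m, hm, hmk⟩ => iSup₂_le fun n hn => ?_
  obtain rfl : m = k := by exact_mod_cast hmk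
  have hnN : (n : ℝ≥0∞) < N :=
    ((ENNReal.div_le_iff (by exact_mod_cast hk.ne') (by simp)).1
      (div_le_elasticity ha hn hm)).trans_lt hN
  exact_mod_cast hnN.le

lemma exists_isHAtom_of_nonUnits_pow_subset {n : ℕ} {a : G} (ha : a ∈ nonUnits H)
    (hsub : nonUnits H ^ n ⊆ a • (H : Set G)) : ∃ u, IsHAtom H u := by
  induction n generalizing a with
  | zero =>
    obtain ⟨y, hy, hay⟩ := hsub (by simp : (1 : G) ∈ nonUnits H ^ 0)
    exact absurd (eq_inv_of_mul_eq_one_right hay ▸ hy) ha.2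
  | succ n ih =>
    by_cases hat : IsHAtom H a
    · exact ⟨a, hat⟩
    obtain ⟨b, c, hb, hc, rfl, hbu, hcu⟩ :
        ∃ b c, b ∈ H ∧ c ∈ H ∧ a = b * c ∧ ¬IsHUnit H b ∧ ¬IsHUnit H c := by
      by_contra! hno
      exact hat ⟨ha.1, fun hu => ha.2 hu.2,
        fun b c hb hc h => or_iff_not_imp_left.2 (hno b c hb hc h)⟩
    have hc' : c ∈ nonUnits H := ⟨hc, fun h => hcu ⟨hc, h⟩⟩
    -- `mⁿ c ⊆ mⁿ⁺¹ ⊆ b c H`, so cancelling `c` gives `mⁿ ⊆ b H`.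
    refine ih ⟨hb, fun h => hbu ⟨hb, h⟩⟩ fun x hx => ?_
    obtain ⟨y, hy, hxy⟩ := hsub (pow_succ (nonUnits H) n ▸ Set.mul_mem_mul hx hc')
    exact ⟨y, hy, mul_right_cancel (b := c) (by rw [← hxy]; exact mul_right_comm b y c)⟩

lemma IsStronglyPrimary.exists_isHAtom (hsp : IsStronglyPrimary H) : ∃ u, IsHAtom H u := by
  obtain ⟨a, ha⟩ := hsp.1
  obtain ⟨n, -, hsub⟩ := hsp.2 a ha
  exact exists_isHAtom_of_nonUnits_pow_subset ha hsub

lemma lambda_eq_top_of_rho_lt_top {u : G} (hu : IsHAtom H u)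
    (hrho : ∀ k : ℕ, 0 < k → rho H k < ⊤) : Lambda H H = ⊤ := by
  by_contra hL
  obtain ⟨l, hl⟩ := ENat.ne_top_iff_exists.1 hL
  have hB : (Finset.Icc 1 l).sup (fun k : ℕ => rho H k) < ⊤ :=
    (Finset.sup_lt_iff bot_lt_top).2 fun k hk => hrho k (Finset.mem_Icc.1 hk).1
  obtain ⟨b, hb⟩ := ENat.ne_top_iff_exists.1 hB.ne
  have hn := mem_lengthSet_pow hu (b + 1)
  have hk := Nat.sInf_mem ⟨_, hn⟩
  have hk0 : 0 < sInf (lengthSet H (u ^ (b + 1))) :=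
    Nat.pos_of_ne_zero fun h => zero_notMem_lengthSet_pow hu b.succ_pos (h ▸ hk)
  have hkl : ((sInf (lengthSet H (u ^ (b + 1))) : ℕ) : ℕ∞) ≤ l :=
    hl ▸ sInf_lengthSet_le_lambda (H.pow_mem hu.1 _) ⟨_, hn⟩
  have hbb : ((b + 1 : ℕ) : ℕ∞) ≤ b := by
    rw [hb]
    exact (le_rho (H.pow_mem hu.1 _) hk hn).trans
      (Finset.le_sup (f := fun k : ℕ => rho H k) (Finset.mem_Icc.2 ⟨hk0, by exact_mod_cast hkl⟩))
  exact absurd (by exact_mod_cast hbb) b.not_succ_le_self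

end Invariants

theorem stmt2_general {G : Type*} [CommGroup G] (H : Submonoid G)
    (hsp : IsStronglyPrimary H) :
    (GloballyTame H → elasticity H < ⊤) ∧
    (elasticity H < ⊤ → ∀ k : ℕ, 0 < k → rho H (k : ℕ∞) < ⊤) ∧
    ((∀ k : ℕ, 0 < k → rho H (k : ℕ∞) < ⊤) → Lambda H (H : Set G) = ⊤) := by
  obtain ⟨u, hu⟩ := hsp.exists_isHAtom
  exact ⟨elasticity_lt_top_of_globallyTame,
    fun hel _ hk => rho_lt_top_of_elasticity_lt_top hel hk, lambda_eq_top_of_rho_lt_top hu⟩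

/-- For a strongly primary monoid `H`: globally tame implies finite
elasticity; finite elasticity implies `ρ_k(H) < ∞` for all `k`; and the latter
implies `Λ(H) = ∞`. -/
theorem stmt2 {G : Type*} [CommGroup G] (H : Submonoid G) (hq : IsQuotientGroup H)
    (hsp : IsStronglyPrimary H) :
    (GloballyTame H → elasticity H < ⊤) ∧
    (elasticity H < ⊤ → ∀ k : ℕ, 0 < k → rho H (k : ℕ∞) < ⊤) ∧
    ((∀ k : ℕ, 0 < k → rho H (k : ℕ∞) < ⊤) → Lambda H (H : Set G) = ⊤) :=
  stmt2_general H hsp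
end

section
/- Let (H, m) be a primary monoid and n = Ĥ \ Ĥ^×. (1) If every element of n has a power lying in m, then Ĥ is primary. (2) If the conductor (H : Ĥ) ≠ ∅, then Ĥ is primary if and only if every element of n has a power lying in m. -/
open Pointwise

/-!
In a primary monoid `H`, an element `a ∈ m` with `a⁻¹ ∈ Ĥ` would be a unit: if `c a⁻ⁿ ∈ H` for
all `n`, then `c` is a non-unit (else `a⁻¹ ∈ H`), so primarity gives `aⁿ ∈ cH` and
`a⁻¹ = aⁿ c⁻¹ · c a⁻⁽ⁿ⁺¹⁾ ∈ H`. Hence `m ⊆ n`, and when elements of `n` have powers in `m`,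
primarity of `H` transfers to `Ĥ`. Conversely, an element `f` of the conductor lies in `H`;
either `f` is a unit and `Ĥ = H`, or `f ∈ n` and primarity of `Ĥ` gives `xᴺ ∈ fĤ ⊆ H`.
-/

namespace HatH

variable {G : Type*} [CommGroup G] {H : Submonoid G}

lemma mem_hatH_of_mem {x : G} (hx : x ∈ H) : x ∈ hatH H :=
  ⟨1, H.one_mem, fun n => by simpa using H.pow_mem hx n⟩

lemma mul_mem_hatH {x y : G} (hx : x ∈ hatH H) (hy : y ∈ hatH H) : x * y ∈ hatH H := by
  obtain ⟨c, hc, hcx⟩ := hx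
  obtain ⟨d, hd, hdy⟩ := hy
  refine ⟨c * d, H.mul_mem hc hd, fun n => ?_⟩
  rw [mul_pow, mul_mul_mul_comm]
  exact H.mul_mem (hcx n) (hdy n)

lemma pow_mem_hatH {x : G} (hx : x ∈ hatH H) (k : ℕ) : x ^ k ∈ hatH H := by
  obtain ⟨c, hc, hcx⟩ := hx
  exact ⟨c, hc, fun n => by rw [← pow_mul]; exact hcx (k * n)⟩

lemma inv_mem_hatH_of_inv_pow_mem {x : G} {k : ℕ} (hx : x ∈ hatH H) (hk : 0 < k)
    (hinv : (x ^ k)⁻¹ ∈ H) : x⁻¹ ∈ hatH H := by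
  obtain ⟨k, rfl⟩ := Nat.exists_eq_add_one_of_ne_zero hk.ne'
  have hxinv : x⁻¹ = x ^ k * (x ^ (k + 1))⁻¹ := by group
  rw [hxinv]
  exact mul_mem_hatH (pow_mem_hatH hx k) (mem_hatH_of_mem hinv)

lemma pow_mem_nonUnits_of_pow_mem {x : G} {k : ℕ} (hx : x ∈ hatNonUnits H) (hk : 0 < k)
    (hxk : x ^ k ∈ H) : x ^ k ∈ nonUnits H :=
  ⟨hxk, fun hinv => hx.2 (inv_mem_hatH_of_inv_pow_mem hx.1 hk hinv)⟩

lemma mem_of_mem_conductorH {f : G} (hf : f ∈ conductorH H) : f ∈ H := by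
  simpa using hf 1 (mem_hatH_of_mem H.one_mem)

lemma inv_mem_of_inv_mem_hatH (hp : IsPrimaryMonoid H) {a : G} (ha : a ∈ H)
    (hinv : a⁻¹ ∈ hatH H) : a⁻¹ ∈ H := by
  by_contra ha'
  obtain ⟨c, hc, hca⟩ := hinv
  have hcinv : c⁻¹ ∉ H := fun hcinv => ha' <| by
    have hainv : a⁻¹ = c⁻¹ * (c * a⁻¹ ^ 1) := by group
    rw [hainv]
    exact H.mul_mem hcinv (hca 1)
  obtain ⟨n, -, h, hh, hch⟩ := hp.2 c ⟨hc, hcinv⟩ a ⟨ha, ha'⟩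
  have hainv : a⁻¹ = h * (c * a⁻¹ ^ (n + 1)) := by
    have hch : c * h = a ^ n := hch
    rw [← mul_assoc, mul_comm h c, hch]
    group
  exact ha' (hainv ▸ H.mul_mem hh (hca (n + 1)))

lemma nonUnits_subset_hatNonUnits (hp : IsPrimaryMonoid H) : nonUnits H ⊆ hatNonUnits H :=
  fun _ ha => ⟨mem_hatH_of_mem ha.1, fun hinv => ha.2 (inv_mem_of_inv_mem_hatH hp ha.1 hinv)⟩

lemma hatPrimary_of_forall_pow_mem_nonUnits (hp : IsPrimaryMonoid H)
    (hpow : ∀ x ∈ hatNonUnits H, ∃ k : ℕ, 0 < k ∧ x ^ k ∈ nonUnits H) : HatPrimary H := by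
  refine ⟨hp.1.mono (nonUnits_subset_hatNonUnits hp), fun a ha b hb => ?_⟩
  obtain ⟨k, hk, hak⟩ := hpow a ha
  obtain ⟨l, hl, hbl⟩ := hpow b hb
  obtain ⟨n, hn, h, hh, hbh⟩ := hp.2 _ hak _ hbl
  obtain ⟨k, rfl⟩ := Nat.exists_eq_add_one_of_ne_zero hk.ne'
  refine ⟨l * n, by positivity, a ^ k * h,
    mul_mem_hatH (pow_mem_hatH ha.1 k) (mem_hatH_of_mem hh), ?_⟩
  have hbh : a ^ (k + 1) * h = (b ^ l) ^ n := hbh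
  rw [pow_mul, ← hbh, pow_succ', mul_assoc]

lemma exists_pow_mem_of_hatPrimary (hp : IsPrimaryMonoid H) (hH : HatPrimary H) {f : G}
    (hf : f ∈ conductorH H) {x : G} (hx : x ∈ hatNonUnits H) : ∃ k : ℕ, 0 < k ∧ x ^ k ∈ H := by
  have hfH := mem_of_mem_conductorH hf
  by_cases hfinv : f⁻¹ ∈ H
  · have hxf : x = f⁻¹ * (f * x) := by group
    exact ⟨1, one_pos, by rw [pow_one, hxf]; exact H.mul_mem hfinv (hf x hx.1)⟩
  · obtain ⟨N, hN, c, hc, hxc⟩ :=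
      hH.2 f (nonUnits_subset_hatNonUnits hp ⟨hfH, hfinv⟩) x hx
    exact ⟨N, hN, hxc ▸ hf c hc⟩

lemma forall_pow_mem_nonUnits_of_hatPrimary (hp : IsPrimaryMonoid H) (hH : HatPrimary H)
    (hcond : (conductorH H).Nonempty) :
    ∀ x ∈ hatNonUnits H, ∃ k : ℕ, 0 < k ∧ x ^ k ∈ nonUnits H := by
  intro x hx
  obtain ⟨f, hf⟩ := hcond
  obtain ⟨k, hk, hxk⟩ := exists_pow_mem_of_hatPrimary hp hH hf hx
  exact ⟨k, hk, pow_mem_nonUnits_of_pow_mem hx hk hxk⟩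

end HatH

open HatH in
theorem stmt14_general {G : Type*} [CommGroup G] (H : Submonoid G)
    (hp : IsPrimaryMonoid H) :
    ((∀ x ∈ hatNonUnits H, ∃ k : ℕ, 0 < k ∧ x ^ k ∈ nonUnits H) → HatPrimary H) ∧
    ((conductorH H).Nonempty →
      (HatPrimary H ↔ ∀ x ∈ hatNonUnits H, ∃ k : ℕ, 0 < k ∧ x ^ k ∈ nonUnits H)) :=
  ⟨hatPrimary_of_forall_pow_mem_nonUnits hp, fun hcond =>
    ⟨fun hH => forall_pow_mem_nonUnits_of_hatPrimary hp hH hcond,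
      hatPrimary_of_forall_pow_mem_nonUnits hp⟩⟩

/-- Let `H` be a primary monoid and `n = Ĥ \\ Ĥ^×`. (1) If every
element of `n` has a power lying in `m`, then `Ĥ` is primary. (2) If the conductor
`(H : Ĥ)` is nonempty, then `Ĥ` is primary iff every element of `n` has a power
lying in `m`. -/
theorem stmt14 {G : Type*} [CommGroup G] (H : Submonoid G) (hq : IsQuotientGroup H)
    (hp : IsPrimaryMonoid H) :
    ((∀ x ∈ hatNonUnits H, ∃ k : ℕ, 0 < k ∧ x ^ k ∈ nonUnits H) → HatPrimary H) ∧
    ((conductorH H).Nonempty →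
      (HatPrimary H ↔ ∀ x ∈ hatNonUnits H, ∃ k : ℕ, 0 < k ∧ x ^ k ∈ nonUnits H)) :=
  stmt14_general H hp
end
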